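/- arXiv:math/0405321 — 2 statements merged into one kernel-verified Lean document; each statement's English description precedes it below -/
import Mathlib

section
/- Let v ∈ ℤ^{2g} be primitive with divisors D₁,…,D_{g-1} (D_i | d_i). Then for all 1 ≤ i < j ≤ g−1, gcd(d_i/D_i, D_j) = 1. -/
/-!
Write `G_k = gcd(v_k, v_{g+k})` and `P(k, i) = ∏_{n=k}^{i-1} D_n`. The divisions in the recursion
are exact: `P(k, i) ∣ G_k` for every `i`. Hence if `e` divides both `d_i / D_i` and `D_j` with
`i < j`, then `P(k, i) · D_i · e = P(k, i+1) · e` divides `P(k, j) · D_j = P(k, j+1)`, which divides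
`G_k`. So `D_i · e` divides `d_i` and every term `G_k / P(k, i)` of the gcd defining `D_i`;
thus `D_i · e ∣ D_i`, and `e = 1` because `D_i ∣ d_i` is positive.
-/

/-- The divisors `D_i(v)` of a vector `v ∈ ℤ^{2g}` (entries indexed `1,…,2g`),
for the polarisation type `(1, d₁, d₁d₂, …, d₁⋯d_{g-1})`. -/
def paraD (g : ℕ) (d : ℕ → ℕ) (v : ℕ → ℤ) : ℕ → ℕ
  | i => Nat.gcd (d i) ((Finset.Icc 1 i).attach.gcd fun j =>
      Int.gcd (v j.1) (v (g + j.1)) / ∏ n ∈ (Finset.Ico j.1 i).attach, paraD g d v n.1)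
  termination_by i => i
  decreasing_by
    exact (Finset.mem_Ico.mp n.2).2

section

variable {g : ℕ} {d : ℕ → ℕ} {v : ℕ → ℤ}

lemma paraD_eq (i : ℕ) :
    paraD g d v i = Nat.gcd (d i) ((Finset.Icc 1 i).gcd fun k =>
      Int.gcd (v k) (v (g + k)) / ∏ n ∈ Finset.Ico k i, paraD g d v n) := by
  rw [paraD]
  conv_rhs => rw [← Finset.attach_image_val (s := Finset.Icc 1 i), Finset.gcd_image]
  simp only [Function.comp_def, Finset.prod_attach]

lemma paraD_dvd (i : ℕ) : paraD g d v i ∣ d i :=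
  paraD_eq (g := g) (v := v) i ▸ Nat.gcd_dvd_left _ _

lemma paraD_pos {i : ℕ} (hd : 0 < d i) : 0 < paraD g d v i :=
  Nat.pos_of_dvd_of_pos (paraD_dvd i) hd

lemma paraD_dvd_div_prod {i k : ℕ} (hk : 1 ≤ k) (hki : k ≤ i) :
    paraD g d v i ∣ Int.gcd (v k) (v (g + k)) / ∏ n ∈ Finset.Ico k i, paraD g d v n := by
  rw [paraD_eq]
  exact (Nat.gcd_dvd_right _ _).trans (Finset.gcd_dvd (Finset.mem_Icc.mpr ⟨hk, hki⟩))

lemma prod_Ico_paraD_dvd {k : ℕ} (hk : 1 ≤ k) (i : ℕ) :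
    ∏ n ∈ Finset.Ico k i, paraD g d v n ∣ Int.gcd (v k) (v (g + k)) := by
  induction i with
  | zero => simp
  | succ i ih =>
    rcases le_or_gt k i with hki | hik
    · rw [Finset.prod_Ico_succ_top hki]
      exact (Nat.dvd_div_iff_mul_dvd ih).mp (paraD_dvd_div_prod hk hki)
    · simp [Finset.Ico_eq_empty (by omega : ¬k < i + 1)]

lemma dvd_paraD {i m : ℕ} (hm : m ∣ d i)
    (hterms : ∀ k ∈ Finset.Icc 1 i,
      (∏ n ∈ Finset.Ico k i, paraD g d v n) * m ∣ Int.gcd (v k) (v (g + k))) :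
    m ∣ paraD g d v i := by
  rw [paraD_eq]
  refine Nat.dvd_gcd hm (Finset.dvd_gcd fun k hk => ?_)
  exact (Nat.dvd_div_iff_mul_dvd (prod_Ico_paraD_dvd (Finset.mem_Icc.mp hk).1 i)).mpr (hterms k hk)

end

theorem paraD_restriction_general (g : ℕ) (d : ℕ → ℕ) (hd : ∀ n, 0 < d n)
    (v : ℕ → ℤ) (i j : ℕ) (hij : i < j) :
    Nat.gcd (d i / paraD g d v i) (paraD g d v j) = 1 := by
  set e := Nat.gcd (d i / paraD g d v i) (paraD g d v j)
  have hed : paraD g d v i * e ∣ d i :=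
    (Nat.dvd_div_iff_mul_dvd (paraD_dvd i)).mp (Nat.gcd_dvd_left _ _)
  have key : paraD g d v i * e ∣ paraD g d v i := dvd_paraD hed fun k hk => by
    obtain ⟨hk1, hki⟩ := Finset.mem_Icc.mp hk
    calc (∏ n ∈ Finset.Ico k i, paraD g d v n) * (paraD g d v i * e)
        = (∏ n ∈ Finset.Ico k (i + 1), paraD g d v n) * e := by
          rw [← mul_assoc, Finset.prod_Ico_succ_top hki]
      _ ∣ (∏ n ∈ Finset.Ico k j, paraD g d v n) * paraD g d v j :=
          mul_dvd_mul (Finset.prod_dvd_prod_of_subset _ _ _ (Finset.Ico_subset_Ico_right hij))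
            (Nat.gcd_dvd_right _ _)
      _ = ∏ n ∈ Finset.Ico k (j + 1), paraD g d v n :=
          (Finset.prod_Ico_succ_top (hki.trans hij.le) _).symm
      _ ∣ Int.gcd (v k) (v (g + k)) := prod_Ico_paraD_dvd hk1 _
  exact Nat.dvd_one.mp ((Nat.mul_dvd_mul_iff_left (paraD_pos (hd i))).mp (by simpa using key))

/-- Restrictions on the divisors: for a primitive vector `v` and `i < j`,
`gcd(d_i / D_i, D_j) = 1`. -/
theorem paraD_restriction (g : ℕ) (hg : 1 ≤ g) (d : ℕ → ℕ) (hd : ∀ n, 0 < d n)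
    (v : ℕ → ℤ) (hv : (Finset.Icc 1 (2 * g)).gcd (fun j => (v j).natAbs) = 1)
    (i j : ℕ) (hi : 1 ≤ i) (hij : i < j) (hj : j ≤ g - 1) :
    Nat.gcd (d i / paraD g d v i) (paraD g d v j) = 1 :=
  paraD_restriction_general g d hd v i j hij
end

section
/- For a primitive vector v ∈ ℤ^{2g}, define v̂_i := gcd(gcd(v₁,v_{g+1}), …, gcd(v_i,v_{g+i}), d_i·gcd(v_{i+1},v_{g+i+1}), …, (d_i⋯d_{g-1})·gcd(v_g,v_{2g})). Then: (1) v̂₁ = ∏_{i=1}^{g-1} D_i(v) and v̂_g = 1; (2) v̂_i divides d_i·v̂_{i+1} for i = 1,…,g−1; (3) v̂_i divides v̂_{i-1} for i = 2,…,g; (4) v̂_i = gcd(v̂_{i-1}, gcd(v_i, v_{g+i}), d_i·v̂_{i+1}) for i = 2,…,g−1. -/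
/-- `v̂_i = gcd(gcd(v₁,v_{g+1}), …, gcd(v_i,v_{g+i}),
d_i·gcd(v_{i+1},v_{g+i+1}), …, (d_i⋯d_{g-1})·gcd(v_g,v_{2g}))`. -/
def vhat (g : ℕ) (d : ℕ → ℕ) (v : ℕ → ℤ) (i : ℕ) : ℕ :=
  (Finset.Icc 1 g).gcd fun j =>
    if j ≤ i then Int.gcd (v j) (v (g + j))
    else (∏ n ∈ Finset.Icc i (j - 1), d n) * Int.gcd (v j) (v (g + j))

open Finset

theorem Nat.gcd_mul_mul_eq_mul_gcd_of_eq_gcd {a b x y : ℕ} (h : a = Nat.gcd b (a * x)) :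
    Nat.gcd (a * x) (b * y) = a * Nat.gcd x y := by
  rcases Nat.eq_zero_or_pos a with rfl | ha
  · rw [zero_mul, Nat.gcd_zero_right] at h
    simp [← h]
  obtain ⟨e, rfl⟩ : a ∣ b := h ▸ Nat.gcd_dvd_left b (a * x)
  have hcop : Nat.Coprime e x := by
    rw [Nat.gcd_mul_left] at h
    exact (Nat.mul_eq_left ha.ne').mp h.symm
  rw [mul_assoc, Nat.gcd_mul_left, hcop.gcd_mul_left_cancel_right]

theorem Finset.gcd_attach_val {α β : Type*} [CommMonoidWithZero α] [NormalizedGCDMonoid α]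
    (s : Finset β) (f : β → α) : s.attach.gcd (fun j => f j.1) = s.gcd f := by
  classical
  conv_rhs => rw [← s.attach_image_val, Finset.gcd_image]
  rfl

theorem Finset.prod_Ico_dvd_mul_prod_Ico_succ {M : Type*} [CommMonoid M] (f : ℕ → M)
    (i j : ℕ) :
    ∏ n ∈ Ico i j, f n ∣ f i * ∏ n ∈ Ico (i + 1) j, f n := by
  rcases lt_or_ge i j with hij | hji
  · rw [prod_eq_prod_Ico_succ_bot hij]
  · simp [Ico_eq_empty_of_le hji, Ico_eq_empty_of_le (hji.trans i.le_succ)]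

section Vhat

variable (g : ℕ) (d : ℕ → ℕ) (v : ℕ → ℤ)

def pairGcd (j : ℕ) : ℕ := Int.gcd (v j) (v (g + j))

def paraDProd (j i : ℕ) : ℕ := ∏ n ∈ Ico j i, paraD g d v n

theorem paraD_eq_gcd (i : ℕ) :
    paraD g d v i =
      Nat.gcd (d i) ((Icc 1 i).gcd fun j => pairGcd g v j / paraDProd g d v j i) := by
  rw [paraD, ← Finset.gcd_attach_val (Icc 1 i)]
  simp only [pairGcd, paraDProd, Finset.prod_attach]

theorem paraD_dvd_pairGcd_div {i j : ℕ} (hj : j ∈ Icc 1 i) :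
    paraD g d v i ∣ pairGcd g v j / paraDProd g d v j i :=
  paraD_eq_gcd g d v i ▸ (Nat.gcd_dvd_right _ _).trans (Finset.gcd_dvd hj)

theorem paraDProd_succ {j i : ℕ} (h : j ≤ i) :
    paraDProd g d v j (i + 1) = paraDProd g d v j i * paraD g d v i :=
  Finset.prod_Ico_succ_top h _

theorem paraDProd_dvd_pairGcd {j : ℕ} (hj : 1 ≤ j) {i : ℕ} (hji : j ≤ i) :
    paraDProd g d v j i ∣ pairGcd g v j := by
  induction i, hji using Nat.le_induction with
  | base => simp [paraDProd]
  | succ i hji ih =>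
    rw [paraDProd_succ g d v hji]
    exact Nat.mul_dvd_of_dvd_div ih (paraD_dvd_pairGcd_div g d v (mem_Icc.mpr ⟨hj, hji⟩))

theorem pairGcd_div_paraDProd {i j : ℕ} (hj : j ∈ Icc 1 i) :
    pairGcd g v j / paraDProd g d v j i =
      paraD g d v i * (pairGcd g v j / paraDProd g d v j (i + 1)) := by
  rw [paraDProd_succ g d v (mem_Icc.mp hj).2, ← Nat.div_div_eq_div_mul,
    Nat.mul_div_cancel' (paraD_dvd_pairGcd_div g d v hj)]

theorem eq_one_of_forall_dvd_pairGcd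
    (hv : (Icc 1 (2 * g)).gcd (fun j => (v j).natAbs) = 1) {a : ℕ}
    (ha : ∀ j ∈ Icc 1 g, a ∣ pairGcd g v j) : a = 1 := by
  rw [← Nat.dvd_one, ← hv]
  refine Finset.dvd_gcd fun k hk => ?_
  rw [mem_Icc] at hk
  by_cases hkg : k ≤ g
  · exact (ha k (mem_Icc.mpr ⟨hk.1, hkg⟩)).trans (Int.gcd_dvd_natAbs_left _ _)
  · have h := (ha (k - g) (mem_Icc.mpr ⟨by omega, by omega⟩)).trans
      (Int.gcd_dvd_natAbs_right (v (k - g)) (v (g + (k - g))))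
    rwa [Nat.add_sub_cancel' (by omega)] at h

theorem vhat_eq_gcd (i : ℕ) :
    vhat g d v i = (Icc 1 g).gcd fun j => (∏ n ∈ Ico i j, d n) * pairGcd g v j := by
  refine gcd_congr rfl fun j hj => ?_
  split_ifs with hji
  · simp [Ico_eq_empty_of_le hji, pairGcd]
  · rw [Icc_sub_one_right_eq_Ico_of_not_isMin (by simp at hj ⊢; omega), pairGcd]

theorem vhat_dvd_prod_mul_pairGcd (i : ℕ) {j : ℕ} (hj : j ∈ Icc 1 g) :
    vhat g d v i ∣ (∏ n ∈ Ico i j, d n) * pairGcd g v j :=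
  vhat_eq_gcd g d v i ▸ gcd_dvd hj

theorem vhat_dvd_pairGcd {i j : ℕ} (hj : j ∈ Icc 1 g) (hji : j ≤ i) :
    vhat g d v i ∣ pairGcd g v j := by
  simpa [Ico_eq_empty_of_le hji] using vhat_dvd_prod_mul_pairGcd g d v i hj

theorem vhat_dvd_mul_vhat_succ (i : ℕ) : vhat g d v i ∣ d i * vhat g d v (i + 1) := by
  rw [vhat_eq_gcd, vhat_eq_gcd, ← normalize_eq (d i), ← Finset.gcd_mul_left]
  refine gcd_mono_fun fun j _ => ?_
  rw [← mul_assoc]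
  exact mul_dvd_mul_right (prod_Ico_dvd_mul_prod_Ico_succ d i j) _

theorem vhat_succ_dvd_vhat (i : ℕ) : vhat g d v (i + 1) ∣ vhat g d v i := by
  rw [vhat_eq_gcd, vhat_eq_gcd]
  exact gcd_mono_fun fun _ _ => mul_dvd_mul_right
    (prod_dvd_prod_of_subset _ _ _ (Ico_subset_Ico_left i.le_succ)) _

theorem vhat_top (hv : (Icc 1 (2 * g)).gcd (fun j => (v j).natAbs) = 1) : vhat g d v g = 1 :=
  eq_one_of_forall_dvd_pairGcd g v hv fun _ hj => vhat_dvd_pairGcd g d v hj (mem_Icc.mp hj).2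

theorem vhat_eq_gcd_pred_succ {i : ℕ} (hi : i ∈ Icc 1 g) :
    vhat g d v i = Nat.gcd (vhat g d v (i - 1))
      (Nat.gcd (pairGcd g v i) (d i * vhat g d v (i + 1))) := by
  have hi1 : i - 1 + 1 = i := Nat.sub_add_cancel (mem_Icc.mp hi).1
  refine Nat.dvd_antisymm (Nat.dvd_gcd ?_ (Nat.dvd_gcd ?_ ?_)) ?_
  · simpa [hi1] using vhat_succ_dvd_vhat g d v (i - 1)
  · exact vhat_dvd_pairGcd g d v hi le_rfl
  · exact vhat_dvd_mul_vhat_succ g d v i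
  conv_rhs => rw [vhat_eq_gcd]
  refine dvd_gcd fun j hj => ?_
  rcases lt_trichotomy j i with hji | rfl | hij
  · have h := vhat_dvd_prod_mul_pairGcd g d v (i - 1) hj
    rw [Ico_eq_empty_of_le (by omega)] at h
    rw [Ico_eq_empty_of_le hji.le]
    exact (Nat.gcd_dvd_left _ _).trans h
  · simpa using (Nat.gcd_dvd_right _ _).trans (Nat.gcd_dvd_left _ _)
  · rw [prod_eq_prod_Ico_succ_bot hij, mul_assoc]
    exact ((Nat.gcd_dvd_right _ _).trans (Nat.gcd_dvd_right _ _)).trans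
      (mul_dvd_mul_left _ (vhat_dvd_prod_mul_pairGcd g d v (i + 1) hj))

def reducedVhat (i : ℕ) : ℕ :=
  (Icc 1 g).gcd fun j =>
    if j ≤ i then pairGcd g v j / paraDProd g d v j i
    else (∏ n ∈ Ico i j, d n) * pairGcd g v j

theorem reducedVhat_one : reducedVhat g d v 1 = vhat g d v 1 := by
  rw [vhat_eq_gcd]
  refine gcd_congr rfl fun j hj => ?_
  split_ifs with hj1
  · obtain rfl : j = 1 := le_antisymm hj1 (mem_Icc.mp hj).1
    simp [paraDProd]
  · rfl

theorem reducedVhat_top (hv : (Icc 1 (2 * g)).gcd (fun j => (v j).natAbs) = 1) :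
    reducedVhat g d v g = 1 := by
  refine eq_one_of_forall_dvd_pairGcd g v hv fun j hj => ?_
  have h : reducedVhat g d v g ∣ _ := gcd_dvd hj
  rw [if_pos (mem_Icc.mp hj).2] at h
  exact h.trans (Nat.div_dvd_of_dvd
    (paraDProd_dvd_pairGcd g d v (mem_Icc.mp hj).1 (mem_Icc.mp hj).2))

theorem reducedVhat_eq_mul_succ {i : ℕ} (hi : i ≤ g) :
    reducedVhat g d v i = paraD g d v i * reducedVhat g d v (i + 1) := by
  have hIcc : Icc 1 g = Icc 1 i ∪ Ioc i g := by
    ext j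
    simp only [mem_union, mem_Icc, mem_Ioc]
    omega
  have split : ∀ f : ℕ → ℕ, (Icc 1 g).gcd f = Nat.gcd ((Icc 1 i).gcd f) ((Ioc i g).gcd f) :=
    fun f => by rw [hIcc, gcd_union]; rfl
  set L := (Icc 1 i).gcd fun j => pairGcd g v j / paraDProd g d v j (i + 1)
  set R := (Ioc i g).gcd fun j => (∏ n ∈ Ico (i + 1) j, d n) * pairGcd g v j
  have hL :
      ((Icc 1 i).gcd fun j => pairGcd g v j / paraDProd g d v j i) = paraD g d v i * L := by
    rw [← normalize_eq (paraD g d v i), ← Finset.gcd_mul_left]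
    exact gcd_congr rfl fun j hj => pairGcd_div_paraDProd g d v hj
  have hD : paraD g d v i = Nat.gcd (d i) (paraD g d v i * L) := by
    conv_lhs => rw [paraD_eq_gcd, hL]
  have hcur : reducedVhat g d v i = Nat.gcd (paraD g d v i * L) (d i * R) := by
    rw [reducedVhat, split, ← hL, ← normalize_eq (d i), ← Finset.gcd_mul_left]
    congr 1 <;> refine gcd_congr rfl fun j hj => ?_
    · rw [if_pos (mem_Icc.mp hj).2]
    · rw [if_neg (mem_Ioc.mp hj).1.not_ge, prod_eq_prod_Ico_succ_bot (mem_Ioc.mp hj).1, mul_assoc]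
  have hsucc : reducedVhat g d v (i + 1) = Nat.gcd L R := by
    rw [reducedVhat, split]
    congr 1 <;> refine gcd_congr rfl fun j hj => ?_
    · rw [if_pos ((mem_Icc.mp hj).2.trans i.le_succ)]
    · split_ifs with hj1
      · obtain rfl : j = i + 1 := le_antisymm hj1 (mem_Ioc.mp hj).1
        simp [paraDProd]
      · rfl
  rw [hcur, hsucc, Nat.gcd_mul_mul_eq_mul_gcd_of_eq_gcd hD]

theorem reducedVhat_eq_prod (hv : (Icc 1 (2 * g)).gcd (fun j => (v j).natAbs) = 1) {i : ℕ}
    (hi : i ≤ g) : reducedVhat g d v i = ∏ n ∈ Ico i g, paraD g d v n := by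
  refine Nat.decreasingInduction
    (motive := fun i _ => reducedVhat g d v i = ∏ n ∈ Ico i g, paraD g d v n)
    (fun i hi ih => ?_) (by simp [reducedVhat_top g d v hv]) hi
  rw [reducedVhat_eq_mul_succ g d v hi.le, ih, prod_eq_prod_Ico_succ_bot hi]

end Vhat

theorem vhat_properties_general (g : ℕ) (hg : 1 ≤ g) (d : ℕ → ℕ)
    (v : ℕ → ℤ) (hv : (Finset.Icc 1 (2 * g)).gcd (fun j => (v j).natAbs) = 1) :
    (vhat g d v 1 = ∏ i ∈ Finset.Icc 1 (g - 1), paraD g d v i ∧ vhat g d v g = 1) ∧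
    (∀ i, 1 ≤ i → i ≤ g - 1 → vhat g d v i ∣ d i * vhat g d v (i + 1)) ∧
    (∀ i, 2 ≤ i → i ≤ g → vhat g d v i ∣ vhat g d v (i - 1)) ∧
    (∀ i, 2 ≤ i → i ≤ g - 1 →
      vhat g d v i =
        Nat.gcd (vhat g d v (i - 1))
          (Nat.gcd (Int.gcd (v i) (v (g + i))) (d i * vhat g d v (i + 1)))) := by
  refine ⟨⟨?_, vhat_top g d v hv⟩, fun i _ _ => vhat_dvd_mul_vhat_succ g d v i,
    fun i hi _ => ?_, fun i hi hig => vhat_eq_gcd_pred_succ g d v (by simp; omega)⟩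
  · rw [← reducedVhat_one, reducedVhat_eq_prod g d v hv hg,
      Icc_sub_one_right_eq_Ico_of_not_isMin (by simp; omega)]
  · simpa [Nat.sub_add_cancel (by omega : 1 ≤ i)] using vhat_succ_dvd_vhat g d v (i - 1)

/-- Properties of `v̂_i` for a primitive vector `v`. -/
theorem vhat_properties (g : ℕ) (hg : 1 ≤ g) (d : ℕ → ℕ) (hd : ∀ n, 0 < d n)
    (v : ℕ → ℤ) (hv : (Finset.Icc 1 (2 * g)).gcd (fun j => (v j).natAbs) = 1) :
    (vhat g d v 1 = ∏ i ∈ Finset.Icc 1 (g - 1), paraD g d v i ∧ vhat g d v g = 1) ∧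
    (∀ i, 1 ≤ i → i ≤ g - 1 → vhat g d v i ∣ d i * vhat g d v (i + 1)) ∧
    (∀ i, 2 ≤ i → i ≤ g → vhat g d v i ∣ vhat g d v (i - 1)) ∧
    (∀ i, 2 ≤ i → i ≤ g - 1 →
      vhat g d v i =
        Nat.gcd (vhat g d v (i - 1))
          (Nat.gcd (Int.gcd (v i) (v (g + i))) (d i * vhat g d v (i + 1)))) :=
  vhat_properties_general g hg d v hv
end
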